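/- Let t be an attack–defense tree term over B in which each basic event occurs at most once, and let V_P(t) = (X₁, X₂) be its powerset semantics. Then X₂ is exactly the set of unsatisfying assignments of t, i.e., X₂ = { S ⊆ B(t) : eval_S(t) = ff }. -/

import Mathlib

/-- Attack–defense tree terms over a type `B` of basic events. -/
inductive ADT (B : Type*) where
  | leaf : B → ADT B
  | and : ADT B → ADT B → ADT B
  | or : ADT B → ADT B → ADT B
  | not : ADT B → ADT B

namespace ADT

variable {B : Type*} [DecidableEq B]

/-- The finite set `B(t)` of basic events occurring in a term. -/
def events : ADT B → Finset B
  | .leaf b => {b}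
  | .and t₁ t₂ => events t₁ ∪ events t₂
  | .or t₁ t₂ => events t₁ ∪ events t₂
  | .not t => events t

/-- Linearity: each basic event occurs at most once in the term. -/
def Linear : ADT B → Prop
  | .leaf _ => True
  | .and t₁ t₂ => Linear t₁ ∧ Linear t₂ ∧ Disjoint (events t₁) (events t₂)
  | .or t₁ t₂ => Linear t₁ ∧ Linear t₂ ∧ Disjoint (events t₁) (events t₂)
  | .not t => Linear t

/-- Boolean semantics `eval_S(t)` for an assignment `S ⊆ B` (the set of basic
events set to true). -/
def eval (S : Finset B) : ADT B → Bool
  | .leaf b => decide (b ∈ S)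
  | .and t₁ t₂ => eval S t₁ && eval S t₂
  | .or t₁ t₂ => eval S t₁ || eval S t₂
  | .not t => !eval S t


/-- The powerset bottom-up traversal semantics `V_P(t) = (X₁, X₂)`:
the first component collects (what are claimed to be) the satisfying
assignments, the second the unsatisfying ones. -/
def VP : ADT B → Finset (Finset B) × Finset (Finset B)
  | .leaf b => ({{b}}, {∅})
  | .and t₁ t₂ =>
      (Finset.image₂ (· ∪ ·) (VP t₁).1 (VP t₂).1,
        Finset.image₂ (· ∪ ·) (VP t₁).2 (VP t₂).1 ∪
          Finset.image₂ (· ∪ ·) (VP t₁).2 (VP t₂).2 ∪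
          Finset.image₂ (· ∪ ·) (VP t₁).1 (VP t₂).2)
  | .or t₁ t₂ =>
      (Finset.image₂ (· ∪ ·) (VP t₁).1 (VP t₂).1 ∪
          Finset.image₂ (· ∪ ·) (VP t₁).1 (VP t₂).2 ∪
          Finset.image₂ (· ∪ ·) (VP t₁).2 (VP t₂).1,
        Finset.image₂ (· ∪ ·) (VP t₁).2 (VP t₂).2)
  | .not t => ((VP t).2, (VP t).1)

lemma eval_congr (t : ADT B) {S S' : Finset B} (h : ∀ b ∈ t.events, b ∈ S ↔ b ∈ S') :
    t.eval S = t.eval S' := by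
  induction t with
  | leaf b => simp [eval, h b (by simp [events])]
  | and t₁ t₂ ih₁ ih₂ | or t₁ t₂ ih₁ ih₂ =>
    simp only [events, Finset.mem_union] at h
    simp only [eval, ih₁ fun b hb => h b (.inl hb), ih₂ fun b hb => h b (.inr hb)]
  | not t ih => simp only [eval, ih h]

lemma eval_inter_events (t : ADT B) (S : Finset B) : t.eval (S ∩ t.events) = t.eval S :=
  t.eval_congr fun b hb => by simp [hb]

lemma eval_union_of_disjoint (t : ADT B) {A C : Finset B} (h : Disjoint C t.events) :
    t.eval (A ∪ C) = t.eval A :=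
  t.eval_congr fun b hb => by simp [Finset.disjoint_right.mp h hb]

def assignments (t : ADT B) (v : Bool) : Finset (Finset B) :=
  t.events.powerset.filter fun S => t.eval S = v

lemma mem_assignments {t : ADT B} {v : Bool} {S : Finset B} :
    S ∈ t.assignments v ↔ S ⊆ t.events ∧ t.eval S = v := by
  simp [assignments]

/-- On disjoint events an assignment splits uniquely as `S = (S ∩ B(t₁)) ∪ (S ∩ B(t₂))`, and each
part determines the value of its own subterm. -/
lemma mem_image₂_union_assignments {t₁ t₂ : ADT B} (hd : Disjoint t₁.events t₂.events)
    {v₁ v₂ : Bool} {S : Finset B} :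
    S ∈ Finset.image₂ (· ∪ ·) (t₁.assignments v₁) (t₂.assignments v₂) ↔
      S ⊆ t₁.events ∪ t₂.events ∧ t₁.eval S = v₁ ∧ t₂.eval S = v₂ := by
  simp only [Finset.mem_image₂, mem_assignments]
  constructor
  · rintro ⟨A₁, ⟨hA₁, rfl⟩, A₂, ⟨hA₂, rfl⟩, rfl⟩
    refine ⟨Finset.union_subset_union hA₁ hA₂, ?_, ?_⟩
    · exact t₁.eval_union_of_disjoint (hd.symm.mono_left hA₂)
    · rw [Finset.union_comm]
      exact t₂.eval_union_of_disjoint (hd.mono_left hA₁)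
  · rintro ⟨hS, rfl, rfl⟩
    refine ⟨S ∩ t₁.events, ⟨Finset.inter_subset_right, t₁.eval_inter_events S⟩,
      S ∩ t₂.events, ⟨Finset.inter_subset_right, t₂.eval_inter_events S⟩, ?_⟩
    rw [← Finset.inter_union_distrib_left, Finset.inter_eq_left.mpr hS]

theorem VP_eq_assignments (t : ADT B) (hlin : t.Linear) :
    VP t = (t.assignments true, t.assignments false) := by
  induction t with
  | leaf b =>
    simp only [VP, Prod.mk.injEq]
    constructor <;> ext S <;> simp only [mem_assignments, eval, events, Finset.subset_singleton_iff,
      Finset.mem_singleton] <;> aesop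
  | and t₁ t₂ ih₁ ih₂ | or t₁ t₂ ih₁ ih₂ =>
    obtain ⟨hlin₁, hlin₂, hd⟩ := hlin
    simp only [VP, ih₁ hlin₁, ih₂ hlin₂, Prod.mk.injEq]
    constructor <;> ext S <;>
      simp only [Finset.mem_union, mem_image₂_union_assignments hd, mem_assignments, events, eval] <;>
      cases t₁.eval S <;> cases t₂.eval S <;> simp
  | not t ih =>
    simp only [VP, ih hlin]
    ext S <;> simp [mem_assignments, eval, events]

/-- for a linear term, the second component of the powerset
semantics is exactly the set of unsatisfying assignments
`{ S ⊆ B(t) : eval_S(t) = ff }`. -/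
theorem VP_snd_eq_unsatisfying (t : ADT B) (hlin : t.Linear) :
    (VP t).2 = t.events.powerset.filter (fun S => t.eval S = false) := by
  rw [VP_eq_assignments t hlin]
  rfl

end ADT
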